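/- In the game saliquant, for all integers a ≥ 1 and b ≥ 1, (2a + 1)·2^(b−1) − a − 1 ≤ SG((2a + 1)·2^b) ≤ (2a + 1)·2^(b−1) − 1. -/
import Mathlib


/-- Sprague–Grundy values for the game saliquant: the options of a position `n`
are the positions `n - k` where `1 ≤ k ≤ n` and `k` does not divide `n`, and
`sg n` is the least nonnegative integer not among the values of the options. -/
noncomputable def sg : ℕ → ℕ
  | n => sInf {m : ℕ | ∀ k, 1 ≤ k → k ≤ n → ¬ k ∣ n → sg (n - k) ≠ m}
decreasing_by omega

lemma sg_eq (n : ℕ) :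
    sg n = sInf {m : ℕ | ∀ k, 1 ≤ k → k ≤ n → ¬ k ∣ n → sg (n - k) ≠ m} := by
  rw [sg]

lemma sg_mem : ∀ n : ℕ, ∀ k, 1 ≤ k → k ≤ n → ¬ k ∣ n → sg (n - k) ≠ (n - 1) / 2 := by
  intro n
  induction n using Nat.strong_induction_on with
  | _ n ih =>
    intro k hk1 hkn hknd
    have hk2 : 2 ≤ k := by
      rcases Nat.eq_or_lt_of_le hk1 with h | h
      · exact absurd (h ▸ one_dvd n) hknd
      · omega
    have hklt : k < n := by
      rcases Nat.eq_or_lt_of_le hkn with h | h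
      · exact absurd (h ▸ dvd_refl k) hknd
      · omega
    have hup : sg (n - k) ≤ (n - k - 1) / 2 := by
      rw [sg_eq]
      exact Nat.sInf_le (ih (n - k) (by omega))
    omega

lemma sg_upper (n : ℕ) : sg n ≤ (n - 1) / 2 := by
  rw [sg_eq]; exact Nat.sInf_le (sg_mem n)

lemma sg_self_mem (n : ℕ) :
    ∀ k, 1 ≤ k → k ≤ n → ¬ k ∣ n → sg (n - k) ≠ sg n := by
  have h := sg_eq n
  have : sg n ∈ {m : ℕ | ∀ k, 1 ≤ k → k ≤ n → ¬ k ∣ n → sg (n - k) ≠ m} := by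
    rw [h]
    exact Nat.sInf_mem ⟨(n - 1) / 2, sg_mem n⟩
  exact this

lemma sg_odd : ∀ c : ℕ, sg (2 * c + 1) = c := by
  intro c
  induction c using Nat.strong_induction_on with
  | _ c ih =>
    have hup : sg (2 * c + 1) ≤ c := by
      have := sg_upper (2 * c + 1)
      omega
    rcases Nat.eq_or_lt_of_le hup with h | h
    · exact h
    · exfalso
      set v := sg (2 * c + 1) with hv
      have hk := sg_self_mem (2 * c + 1) (2 * (c - v)) (by omega) (by omega)
        (by
          intro hdvd
          have h2 : (2 : ℕ) ∣ 2 * c + 1 := dvd_trans ⟨c - v, rfl⟩ hdvd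
          omega)
      have hsub : 2 * c + 1 - 2 * (c - v) = 2 * v + 1 := by omega
      rw [hsub, ih v h] at hk
      exact hk rfl

lemma sg_even_upper (m : ℕ) (hm : 1 ≤ m) : sg (2 * m) ≤ m - 1 := by
  rw [sg_eq]
  apply Nat.sInf_le
  intro k hk1 hkn hknd
  have hk3 : 3 ≤ k := by
    have h1 : k ≠ 1 := by rintro rfl; exact hknd (one_dvd _)
    have h2 : k ≠ 2 := by rintro rfl; exact hknd ⟨m, rfl⟩
    omega
  have hklt : k < 2 * m := by
    rcases Nat.eq_or_lt_of_le hkn with h | h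
    · exact absurd (h ▸ dvd_refl k) hknd
    · omega
  have hup := sg_upper (2 * m - k)
  omega

theorem saliquant_even_bounds (a b : ℕ) (ha : 1 ≤ a) (hb : 1 ≤ b) :
    (2 * a + 1) * 2 ^ (b - 1) - a - 1 ≤ sg ((2 * a + 1) * 2 ^ b) ∧
    sg ((2 * a + 1) * 2 ^ b) ≤ (2 * a + 1) * 2 ^ (b - 1) - 1 := by
  obtain ⟨b', rfl⟩ : ∃ b', b = b' + 1 := ⟨b - 1, by omega⟩
  set N := (2 * a + 1) * 2 ^ b' with hN
  have hNpos : 2 * a + 1 ≤ N := by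
    have : 1 ≤ 2 ^ b' := Nat.one_le_two_pow
    calc 2 * a + 1 = (2 * a + 1) * 1 := by ring
      _ ≤ (2 * a + 1) * 2 ^ b' := Nat.mul_le_mul_left _ this
  have hn : (2 * a + 1) * 2 ^ (b' + 1) = 2 * N := by
    rw [hN]; ring
  have hb1 : b' + 1 - 1 = b' := by omega
  rw [hn, hb1]
  constructor
  · -- lower bound
    by_contra hlt
    push_neg at hlt
    set v := sg (2 * N) with hv
    have hvN : v < N - a - 1 := by omega
    set k := 2 * N - 1 - 2 * v with hkdef
    have hkodd : k = 2 * (N - 1 - v) + 1 := by omega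
    have hkbig : 2 * a + 3 ≤ k := by omega
    have hknd : ¬ k ∣ 2 * N := by
      intro hdvd
      have hcop : Nat.Coprime k 2 := by
        rw [Nat.coprime_two_right]
        exact ⟨N - 1 - v, by omega⟩
      have hdvd' : k ∣ (2 * a + 1) * 2 ^ (b' + 1) := by rw [hn]; exact hdvd
      have : k ∣ 2 * a + 1 :=
        (Nat.Coprime.dvd_of_dvd_mul_right (Nat.Coprime.pow_right _ hcop) hdvd')
      have := Nat.le_of_dvd (by omega) this
      omega
    have hk := sg_self_mem (2 * N) k (by omega) (by omega) hknd
    have hsub : 2 * N - k = 2 * v + 1 := by omega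
    rw [hsub, sg_odd v] at hk
    exact hk hv
  · exact sg_even_upper N (by omega)
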